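/- arXiv:2604.03405 — 4 statements merged into one kernel-verified Lean document; each statement's English description precedes it below -/
import Mathlib

section
/- Let x* ∈ ℝⁿ, let F : ℝⁿ → ℝⁿ be continuous with F(x*) = 0, and let V : ℝⁿ → ℝ be continuously differentiable with V(x*) = 0. Suppose there exist r > 0 and class-K functions α₁, α₂, α (with α locally Lipschitz) such that α₁(‖x − x*‖) ≤ V(x) ≤ α₂(‖x − x*‖) for all x with ‖x − x*‖ < r, and ⟨∇V(x), F(x)⟩ ≤ −α(V(x)) for all x with 0 < ‖x − x*‖ < r. Let c > 0 be such that the sublevel set Ω_c := {x ∈ ℝⁿ : V(x) ≤ c} is contained in the open ball of radius r about x*. Then every solution x(·) of ẋ = F(x) on [0,∞) with x(0) ∈ Ω_c satisfies x(t) ∈ Ω_c for all t ≥ 0, and moreover x(t) → x* as t → ∞ (i.e., Ω_c is forward invariant and is contained in the region of attraction of x*). -/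
/-!
Along a trajectory, `v t = V (x t)` satisfies `v' ≤ -α v` as long as `x t` stays in the ball
of radius `r`. At the level `c` this derivative is at most `-α c < 0`, so `v` can never cross `c`
and the trajectory stays in `Ω_c ⊆ B(x*, r)`. Then `v ≥ 0` is nonincreasing, and it must tend
to `0`: while `v ≥ ε` it decreases at rate at least `α ε > 0`. Finally `α₁ ‖x t - x*‖ ≤ v t`
forces `x t → x*`.
-/

open scoped RealInnerProductSpace

/-- A class-K function: continuous and strictly increasing on `[0,∞)`, vanishing at `0`,
and mapping `[0,∞)` into `[0,∞)`. -/
def IsClassK (α : ℝ → ℝ) : Prop :=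
  ContinuousOn α (Set.Ici 0) ∧ StrictMonoOn α (Set.Ici 0) ∧ α 0 = 0 ∧
    ∀ s : ℝ, 0 ≤ s → 0 ≤ α s

open Set Filter Topology

namespace IsClassK

variable {α : ℝ → ℝ}

theorem pos (hα : IsClassK α) {s : ℝ} (hs : 0 < s) : 0 < α s := by
  obtain ⟨-, hmono, h0, -⟩ := hα
  simpa [h0] using hmono (le_refl (0 : ℝ)) hs.le hs

theorem tendsto_zero_of_tendsto_comp {ι : Type*} {l : Filter ι} {g : ι → ℝ} (hα : IsClassK α)
    (hg : ∀ᶠ i in l, 0 ≤ g i) (hαg : Tendsto (fun i => α (g i)) l (𝓝 0)) :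
    Tendsto g l (𝓝 0) := by
  refine tendsto_order.2 ⟨fun a ha => hg.mono fun i hi => ha.trans_le hi, fun ε hε => ?_⟩
  filter_upwards [hg, hαg.eventually_lt_const (hα.pos hε)] with i hi hlt
  exact (hα.2.1.lt_iff_lt hi hε.le).1 hlt

end IsClassK

theorem HasGradientAt.comp_hasDerivAt {E : Type*} [NormedAddCommGroup E] [InnerProductSpace ℝ E]
    [CompleteSpace E] {V : E → ℝ} {x : ℝ → E} {g x' : E} {t : ℝ}
    (hV : HasGradientAt V g (x t)) (hx : HasDerivAt x x' t) :
    HasDerivAt (fun s => V (x s)) ⟪g, x'⟫ t :=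
  (hasGradientAt_iff_hasFDerivAt.1 hV).comp_hasDerivAt t hx

section ScalarDifferentialInequalities

variable {v v' : ℝ → ℝ}

theorem le_of_hasDerivAt_neg_at_level {c : ℝ} (hv : ∀ t, 0 ≤ t → HasDerivAt v (v' t) t)
    (h0 : v 0 ≤ c) (hlevel : ∀ t, 0 ≤ t → v t = c → v' t < 0) {t : ℝ} (ht : 0 ≤ t) :
    v t ≤ c :=
  image_le_of_deriv_right_lt_deriv_boundary' (b := t)
    (fun s hs => (hv s hs.1).continuousAt.continuousWithinAt)
    (fun s hs => (hv s hs.1).hasDerivWithinAt) h0 continuousOn_const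
    (fun _ _ => hasDerivWithinAt_const _ _ c) (fun s hs => hlevel s hs.1) ⟨ht, le_rfl⟩

theorem le_sub_mul_of_hasDerivAt_le_neg {a : ℝ} (hv : ∀ t, 0 ≤ t → HasDerivAt v (v' t) t)
    (hv' : ∀ t, 0 ≤ t → v' t ≤ -a) {t : ℝ} (ht : 0 ≤ t) : v t ≤ v 0 - a * t :=
  image_le_of_deriv_right_le_deriv_boundary (b := t)
    (fun s hs => (hv s hs.1).continuousAt.continuousWithinAt)
    (fun s hs => (hv s hs.1).hasDerivWithinAt) (by simp) (by fun_prop)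
    (fun s _ => (((hasDerivAt_id s).const_mul a).const_sub (v 0)).hasDerivWithinAt)
    (fun s hs => by simpa using hv' s hs.1) ⟨ht, le_rfl⟩

theorem antitoneOn_Ici_of_hasDerivAt_nonpos (hv : ∀ t, 0 ≤ t → HasDerivAt v (v' t) t)
    (hv' : ∀ t, 0 ≤ t → v' t ≤ 0) : AntitoneOn v (Ici 0) :=
  antitoneOn_of_hasDerivWithinAt_nonpos (convex_Ici 0)
    (fun t ht => (hv t ht).continuousAt.continuousWithinAt)
    (fun t ht => (hv t (interior_subset ht)).hasDerivWithinAt)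
    (fun t ht => hv' t (interior_subset ht))

theorem tendsto_zero_of_hasDerivAt_le_neg_classK {α : ℝ → ℝ} (hα : IsClassK α)
    (hv : ∀ t, 0 ≤ t → HasDerivAt v (v' t) t) (hnn : ∀ t, 0 ≤ t → 0 ≤ v t)
    (hdecay : ∀ t, 0 ≤ t → v' t ≤ -α (v t)) : Tendsto v atTop (𝓝 0) := by
  have hanti : AntitoneOn v (Ici 0) := antitoneOn_Ici_of_hasDerivAt_nonpos hv fun t ht =>
    (hdecay t ht).trans (neg_nonpos.2 (hα.2.2.2 _ (hnn t ht)))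
  refine tendsto_order.2 ⟨fun a ha => eventually_atTop.2 ⟨0, fun t ht => ha.trans_le (hnn t ht)⟩,
    fun ε hε => ?_⟩
  obtain ⟨T, hT, hvT⟩ : ∃ T, 0 ≤ T ∧ v T < ε := by
    by_contra! hge
    have hαε := hα.pos hε
    have hlin : ∀ t, 0 ≤ t → v t ≤ v 0 - α ε * t := fun t ht =>
      le_sub_mul_of_hasDerivAt_le_neg hv (fun s hs => (hdecay s hs).trans
        (neg_le_neg (hα.2.1.monotoneOn hε.le (hnn s hs) (hge s hs)))) ht
    have hT : 0 ≤ v 0 / α ε := div_nonneg (hnn 0 le_rfl) hαε.le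
    have := hlin _ hT
    rw [mul_div_cancel₀ _ hαε.ne'] at this
    linarith [hge _ hT]
  filter_upwards [eventually_ge_atTop T] with t ht
  exact (hanti hT (hT.trans ht) ht).trans_lt hvT

end ScalarDifferentialInequalities

theorem clf_sublevel_invariant_and_attracting_general {n : ℕ}
    (xs : EuclideanSpace ℝ (Fin n))
    (F : EuclideanSpace ℝ (Fin n) → EuclideanSpace ℝ (Fin n))
    (hFxs : F xs = 0)
    (V : EuclideanSpace ℝ (Fin n) → ℝ)
    (hV : ContDiff ℝ 1 V) (hVxs : V xs = 0)
    (r : ℝ)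
    (α₁ α₂ α : ℝ → ℝ)
    (hα₁ : IsClassK α₁) (hα : IsClassK α)
    (hbound : ∀ x : EuclideanSpace ℝ (Fin n), ‖x - xs‖ < r →
      α₁ ‖x - xs‖ ≤ V x ∧ V x ≤ α₂ ‖x - xs‖)
    (hdecr : ∀ x : EuclideanSpace ℝ (Fin n), 0 < ‖x - xs‖ → ‖x - xs‖ < r →
      ⟪gradient V x, F x⟫ ≤ -α (V x))
    (c : ℝ) (hc : 0 < c)
    (hsub : {x : EuclideanSpace ℝ (Fin n) | V x ≤ c} ⊆ Metric.ball xs r) :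
    ∀ x : ℝ → EuclideanSpace ℝ (Fin n),
      (∀ t : ℝ, 0 ≤ t → HasDerivAt x (F (x t)) t) →
      x 0 ∈ {y : EuclideanSpace ℝ (Fin n) | V y ≤ c} →
      (∀ t : ℝ, 0 ≤ t → x t ∈ {y : EuclideanSpace ℝ (Fin n) | V y ≤ c}) ∧
        Filter.Tendsto x Filter.atTop (nhds xs) := by
  intro x hx hx0
  have hball : ∀ y, V y ≤ c → ‖y - xs‖ < r := fun y hy => mem_ball_iff_norm.1 (hsub hy)
  have hlower : ∀ y, V y ≤ c → α₁ ‖y - xs‖ ≤ V y := fun y hy => (hbound y (hball y hy)).1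
  have hdecr_sublevel : ∀ y, V y ≤ c → ⟪gradient V y, F y⟫ ≤ -α (V y) := by
    intro y hy
    rcases eq_or_ne y xs with rfl | hne
    · simp [hFxs, hVxs, hα.2.2.1]
    · exact hdecr y (norm_pos_iff.2 (sub_ne_zero.2 hne)) (hball y hy)
  have hVx : ∀ t, 0 ≤ t → HasDerivAt (fun s => V (x s)) ⟪gradient V (x t), F (x t)⟫ t :=
    fun t ht => ((hV.differentiable one_ne_zero) _).hasGradientAt.comp_hasDerivAt (hx t ht)
  have hinv : ∀ t, 0 ≤ t → V (x t) ≤ c := fun t ht =>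
    le_of_hasDerivAt_neg_at_level hVx hx0
      (fun s _ hs => (hdecr_sublevel _ hs.le).trans_lt (by simpa [hs] using hα.pos hc)) ht
  refine ⟨hinv, ?_⟩
  have hα₁nn : ∀ t, 0 ≤ α₁ ‖x t - xs‖ := fun t => hα₁.2.2.2 _ (norm_nonneg _)
  have hVlim : Tendsto (fun t => V (x t)) atTop (𝓝 0) :=
    tendsto_zero_of_hasDerivAt_le_neg_classK hα hVx
      (fun t ht => (hα₁nn t).trans (hlower _ (hinv t ht))) (fun t ht => hdecr_sublevel _ (hinv t ht))
  have hα₁lim : Tendsto (fun t => α₁ ‖x t - xs‖) atTop (𝓝 0) :=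
    tendsto_of_tendsto_of_tendsto_of_le_of_le' tendsto_const_nhds hVlim
      (Eventually.of_forall hα₁nn)
      ((eventually_ge_atTop 0).mono fun t ht => hlower _ (hinv t ht))
  exact tendsto_iff_norm_sub_tendsto_zero.2
    (hα₁.tendsto_zero_of_tendsto_comp (Eventually.of_forall fun _ => norm_nonneg _) hα₁lim)

/-- Lemma 2 (CLF sublevel sets as certified regions of attraction, closed-loop form):
a compactly contained sublevel set `Ω_c = {x | V x ≤ c}` of a local CLF is forward
invariant and contained in the region of attraction of the equilibrium. -/
theorem clf_sublevel_invariant_and_attracting {n : ℕ}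
    (xs : EuclideanSpace ℝ (Fin n))
    (F : EuclideanSpace ℝ (Fin n) → EuclideanSpace ℝ (Fin n))
    (hF : Continuous F) (hFxs : F xs = 0)
    (V : EuclideanSpace ℝ (Fin n) → ℝ)
    (hV : ContDiff ℝ 1 V) (hVxs : V xs = 0)
    (r : ℝ) (hr : 0 < r)
    (α₁ α₂ α : ℝ → ℝ)
    (hα₁ : IsClassK α₁) (hα₂ : IsClassK α₂) (hα : IsClassK α)
    (hαlip : LocallyLipschitzOn (Set.Ici 0) α)
    (hbound : ∀ x : EuclideanSpace ℝ (Fin n), ‖x - xs‖ < r →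
      α₁ ‖x - xs‖ ≤ V x ∧ V x ≤ α₂ ‖x - xs‖)
    (hdecr : ∀ x : EuclideanSpace ℝ (Fin n), 0 < ‖x - xs‖ → ‖x - xs‖ < r →
      ⟪gradient V x, F x⟫ ≤ -α (V x))
    (c : ℝ) (hc : 0 < c)
    (hsub : {x : EuclideanSpace ℝ (Fin n) | V x ≤ c} ⊆ Metric.ball xs r) :
    ∀ x : ℝ → EuclideanSpace ℝ (Fin n),
      (∀ t : ℝ, 0 ≤ t → HasDerivAt x (F (x t)) t) →
      x 0 ∈ {y : EuclideanSpace ℝ (Fin n) | V y ≤ c} →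
      (∀ t : ℝ, 0 ≤ t → x t ∈ {y : EuclideanSpace ℝ (Fin n) | V y ≤ c}) ∧
        Filter.Tendsto x Filter.atTop (nhds xs) :=
  clf_sublevel_invariant_and_attracting_general xs F hFxs V hV hVxs r α₁ α₂ α hα₁ hα hbound hdecr c
    hc hsub
end

section
/- Let F : ℝⁿ → ℝⁿ be continuous, let h₁,…,h_p : ℝⁿ → ℝ be continuously differentiable, fix r ∈ {1,…,p}, and define the pivot function h̃(x) := max^{(r)}(h₁(x),…,h_p(x)) (the r-th largest value) and the combinatorial set C̃ := {x ∈ ℝⁿ : h̃(x) ≥ 0}. Let θ : ℝⁿ → [0,∞) be continuous, let ρ : ℝ → ℝ be continuous and positive definite, and let α : ℝ → ℝ be extended class-K and locally Lipschitz. Suppose there is an open set D ⊇ C̃ such that for every j ∈ {1,…,p} and every x ∈ D: ⟨∇h_j(x), F(x)⟩ ≥ −α(h_j(x)) − θ(x)·ρ(h_j(x) − h̃(x)). Then every solution x(·) of ẋ = F(x) on [0,∞) with x(0) ∈ C̃ satisfies x(t) ∈ C̃ for all t ≥ 0; equivalently, at least r of the values h₁(x(t)),…,h_p(x(t)) are nonnegative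 for all t ≥ 0. -/
open scoped RealInnerProductSpace

/-- The `r`-th largest value among `w 0, …, w (p-1)`: the maximum over all subsets
`S ⊆ Fin p` with `|S| = r` of `min_{j ∈ S} w j`. -/
noncomputable def rthMax {p : ℕ} (r : ℕ) (w : Fin p → ℝ) : ℝ :=
  sSup {m : ℝ | ∃ S : Finset (Fin p), S.card = r ∧ m = sInf (w '' ↑S)}

/-- An extended class-K function: continuous, strictly increasing, vanishing at `0`. -/
def IsClassKe (α : ℝ → ℝ) : Prop :=
  Continuous α ∧ StrictMono α ∧ α 0 = 0

/-- A positive definite function: nonnegative, vanishing exactly at `0`. -/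
def IsPosDef (ρ : ℝ → ℝ) : Prop :=
  (∀ s : ℝ, 0 ≤ ρ s) ∧ ρ 0 = 0 ∧ ∀ s : ℝ, s ≠ 0 → 0 < ρ s

/-!
`y ≤ rthMax r w` holds exactly when at least `r` of the values `w j` are `≥ y`; hence `rthMax r`
is monotone, commutes with adding constants and is 1-Lipschitz. Along a trajectory put
`g t = rthMax r (h · (x t))`. At a time `s` with `x s ∈ D`, each constraint attaining the value
`g s` has derivative `⟪∇h_j, F⟫ ≥ -α (g s)` (the `θ ρ` term vanishes on active constraints), while
the others stay strictly above `g s` for a while; so the lower right Dini derivative of `g` at `s`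
is at least `-α (g s)`, which is `≥ 0` when `g s ≤ 0`. As `D` is an open neighbourhood of `C̃`, this
holds just after every time at which `g ≥ 0`; a comparison argument on the negative part of `g`
followed by real induction keeps `g` nonnegative.
-/

open Set Filter Topology Finset

section RthMax

variable {p r : ℕ}

lemma finite_rthMax_candidates (w : Fin p → ℝ) :
    {m : ℝ | ∃ S : Finset (Fin p), S.card = r ∧ m = sInf (w '' ↑S)}.Finite :=
  (Set.finite_range fun S : Finset (Fin p) => sInf (w '' ↑S)).subset
    fun _ ⟨S, _, hm⟩ => ⟨S, hm.symm⟩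

theorem le_rthMax_iff (hr1 : 1 ≤ r) (hrp : r ≤ p) (w : Fin p → ℝ) (y : ℝ) :
    y ≤ rthMax r w ↔ r ≤ #{j | y ≤ w j} := by
  constructor
  · intro hy
    obtain ⟨S₀, -, hS₀⟩ := exists_subset_card_eq (s := (univ : Finset (Fin p))) (by simpa)
    obtain ⟨S, hS, hmax⟩ := Set.Nonempty.csSup_mem
      (s := {m : ℝ | ∃ S : Finset (Fin p), S.card = r ∧ m = sInf (w '' ↑S)})
      ⟨_, S₀, hS₀, rfl⟩ (finite_rthMax_candidates w)
    rw [rthMax, hmax] at hy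
    have hsub : S ⊆ ({j | y ≤ w j} : Finset (Fin p)) := fun j hj => mem_filter.2 ⟨mem_univ j,
      hy.trans <| csInf_le (S.finite_toSet.image w).bddBelow (Set.mem_image_of_mem w hj)⟩
    exact hS ▸ card_le_card hsub
  · intro hcard
    obtain ⟨S, hSsub, hS⟩ := exists_subset_card_eq hcard
    have hne : (w '' ↑S).Nonempty := (coe_nonempty.2 (card_pos.1 (hS ▸ hr1))).image w
    calc y ≤ sInf (w '' ↑S) := le_csInf hne <| by
          rintro _ ⟨j, hj, rfl⟩
          exact (mem_filter.1 (hSsub hj)).2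
      _ ≤ rthMax r w := le_csSup (finite_rthMax_candidates w).bddAbove ⟨S, hS, rfl⟩

theorem rthMax_mono (hr1 : 1 ≤ r) (hrp : r ≤ p) : Monotone (rthMax (p := p) r) :=
  fun w w' hw => (le_rthMax_iff hr1 hrp w' _).2 <| ((le_rthMax_iff hr1 hrp w _).1 le_rfl).trans <|
    card_le_card <| monotone_filter_right _ fun j _ hj => hj.trans (hw j)

theorem rthMax_add_const (hr1 : 1 ≤ r) (hrp : r ≤ p) (w : Fin p → ℝ) (c : ℝ) :
    rthMax r (fun j => w j + c) = rthMax r w + c :=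
  eq_of_forall_le_iff fun y => by
    simp_rw [le_rthMax_iff hr1 hrp, ← sub_le_iff_le_add, le_rthMax_iff hr1 hrp]

theorem lipschitzWith_rthMax (hr1 : 1 ≤ r) (hrp : r ≤ p) :
    LipschitzWith 1 (rthMax (p := p) r) :=
  LipschitzWith.of_le_add fun w w' => calc
    rthMax r w ≤ rthMax r (fun j => w' j + dist w w') := rthMax_mono hr1 hrp fun j => by
        have := (le_abs_self _).trans ((Real.dist_eq _ _).symm.trans_le (dist_le_pi_dist w w' j))
        linarith
    _ = rthMax r w' + dist w w' := rthMax_add_const hr1 hrp w' _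

end RthMax

theorem lt_slope_iff_of_lt {f : ℝ → ℝ} {s z c : ℝ} (hsz : s < z) :
    c < slope f s z ↔ f s + c * (z - s) < f z := by
  rw [slope_def_field, lt_div_iff₀ (sub_pos.2 hsz)]
  constructor <;> intro <;> linarith

theorem slope_lt_iff_of_lt {f : ℝ → ℝ} {s z c : ℝ} (hsz : s < z) :
    slope f s z < c ↔ f z < f s + c * (z - s) := by
  rw [slope_def_field, div_lt_iff₀ (sub_pos.2 hsz)]
  constructor <;> intro <;> linarith

theorem HasDerivAt.eventually_lt_slope {f : ℝ → ℝ} {f' s c : ℝ} (hf : HasDerivAt f f' s)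
    (hc : c < f') : ∀ᶠ z in 𝓝[>] s, c < slope f s z :=
  ((hasDerivAt_iff_tendsto_slope.1 hf).mono_left
    (nhdsWithin_mono s fun _ hz => ne_of_gt hz)).eventually (lt_mem_nhds hc)

theorem nonneg_of_liminf_slope_right_nonneg_Icc {g : ℝ → ℝ} {a b : ℝ}
    (hg : ContinuousOn g (Icc a b)) (ha : 0 ≤ g a)
    (hslope : ∀ s ∈ Ico a b, g s ≤ 0 → ∀ c < 0, ∃ᶠ z in 𝓝[>] s, c < slope g s z) :
    ∀ ⦃t⦄, t ∈ Icc a b → 0 ≤ g t := by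
  intro t ht
  -- The comparison lemma needs a slope bound at every point; the negative part of `g` is
  -- locally zero where `g > 0`.
  suffices max (-g t) 0 ≤ 0 by linarith [le_max_left (-g t) 0]
  refine image_le_of_liminf_slope_right_le_deriv_boundary (f := fun t => max (-g t) 0)
    (B := fun _ => 0) (hg.neg.sup continuousOn_const) (by simpa using ha) continuousOn_const
    (fun _ _ => hasDerivWithinAt_const _ _ _) (fun s hs c hc => ?_) ht
  rcases le_or_gt (g s) 0 with hgs | hgs
  · refine ((hslope s hs hgs (-c) (neg_neg_of_pos hc)).and_eventually
      self_mem_nhdsWithin).mono fun z ⟨hz, hsz⟩ => ?_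
    rw [lt_slope_iff_of_lt hsz] at hz
    rw [slope_lt_iff_of_lt hsz, max_eq_left (neg_nonneg.2 hgs)]
    have : 0 < c * (z - s) := mul_pos hc (sub_pos.2 hsz)
    exact max_lt (by linarith) (by linarith)
  · have hcont : ContinuousWithinAt g (Ioi s) s :=
      (hg s (Ico_subset_Icc_self hs)).mono_of_mem_nhdsWithin (Icc_mem_nhdsGT_of_mem hs)
    refine Eventually.frequently ?_
    filter_upwards [hcont.eventually (lt_mem_nhds hgs), self_mem_nhdsWithin] with z hz hsz
    rw [slope_lt_iff_of_lt hsz, max_eq_right (by linarith), max_eq_right (by linarith)]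
    exact add_pos_of_nonneg_of_pos le_rfl (mul_pos hc (sub_pos.2 hsz))

theorem nonneg_of_liminf_slope_right_nonneg_Ici {g : ℝ → ℝ} {a : ℝ}
    (hg : ContinuousOn g (Ici a)) (ha : 0 ≤ g a)
    (hslope : ∀ t ≥ a, 0 ≤ g t →
      ∀ᶠ s in 𝓝[≥] t, g s ≤ 0 → ∀ c < 0, ∃ᶠ z in 𝓝[>] s, c < slope g s z) :
    ∀ t ≥ a, 0 ≤ g t := by
  intro T hT
  have hclosed : IsClosed ({t | 0 ≤ g t} ∩ Icc a T) := by
    rw [Set.inter_comm]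
    exact (hg.mono Icc_subset_Ici_self).preimage_isClosed_of_isClosed isClosed_Icc isClosed_Ici
  refine hclosed.Icc_subset_of_forall_mem_nhdsWithin ha (fun t ⟨ht, hat, _⟩ => ?_) ⟨hT, le_rfl⟩
  obtain ⟨u, hu, hsub⟩ := mem_nhdsGE_iff_exists_Ico_subset.1 (hslope t hat ht)
  filter_upwards [Icc_mem_nhdsGT hu] with z hz
  exact nonneg_of_liminf_slope_right_nonneg_Icc
    (hg.mono fun s hs => hat.trans hs.1) ht (fun s hs => hsub hs) hz

theorem eventually_lt_slope_rthMax {p r : ℕ} (hr1 : 1 ≤ r) (hrp : r ≤ p)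
    {u : Fin p → ℝ → ℝ} {s d c : ℝ} (hu : ∀ j, ContinuousAt (u j) s)
    (hactive : ∀ j, u j s = rthMax r (fun i => u i s) → ∃ d' ≥ d, HasDerivAt (u j) d' s)
    (hc : c < d) :
    ∀ᶠ z in 𝓝[>] s, c < slope (fun t => rthMax r fun j => u j t) s z := by
  set m := rthMax r fun j => u j s
  obtain ⟨c', hcc', hc'd⟩ := exists_between hc
  have hbelow : ∀ j ∈ ({j | m ≤ u j s} : Finset (Fin p)),
      ∀ᶠ z in 𝓝[>] s, m + c' * (z - s) < u j z := by
    intro j hj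
    rcases (mem_filter.1 hj).2.eq_or_lt with hact | hinact
    · obtain ⟨d', hd', hder⟩ := hactive j hact.symm
      filter_upwards [hder.eventually_lt_slope (hc'd.trans_le hd'), self_mem_nhdsWithin]
        with z hz hsz
      rwa [lt_slope_iff_of_lt hsz, ← hact] at hz
    · have hcont : ContinuousAt (fun z => u j z - c' * (z - s)) s := by fun_prop
      have := hcont.eventually (lt_mem_nhds (show m < u j s - c' * (s - s) by simpa))
      filter_upwards [nhdsWithin_le_nhds this] with z hz
      linarith
  -- The at least `r` values that were `≥ m` at time `s` all stay above the line of slope `c'`.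
  filter_upwards [(eventually_all_finset _).2 hbelow, self_mem_nhdsWithin] with z hz hsz
  have hle : m + c' * (z - s) ≤ rthMax r fun j => u j z :=
    (le_rthMax_iff hr1 hrp _ _).2 <| ((le_rthMax_iff hr1 hrp _ _).1 le_rfl).trans <|
      card_le_card <| monotone_filter_right _ fun j _ hj => (hz j (by simpa using hj)).le
  rw [lt_slope_iff_of_lt hsz]
  have : c * (z - s) < c' * (z - s) := mul_lt_mul_of_pos_right hcc' (sub_pos.2 hsz)
  linarith

theorem combinatorial_cbf_forward_invariance_general {n p : ℕ}
    (F : EuclideanSpace ℝ (Fin n) → EuclideanSpace ℝ (Fin n))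
    (h : Fin p → EuclideanSpace ℝ (Fin n) → ℝ) (hh : ∀ j, ContDiff ℝ 1 (h j))
    (r : ℕ) (hr1 : 1 ≤ r) (hrp : r ≤ p)
    (θ : EuclideanSpace ℝ (Fin n) → ℝ)
    (ρ : ℝ → ℝ) (hρ : IsPosDef ρ)
    (α : ℝ → ℝ) (hα : IsClassKe α)
    (D : Set (EuclideanSpace ℝ (Fin n))) (hD : IsOpen D)
    (hCD : {x : EuclideanSpace ℝ (Fin n) | 0 ≤ rthMax r (fun j => h j x)} ⊆ D)
    (hbarrier : ∀ j : Fin p, ∀ x ∈ D,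
      ⟪gradient (h j) x, F x⟫ ≥
        -α (h j x) - θ x * ρ (h j x - rthMax r (fun i => h i x))) :
    ∀ x : ℝ → EuclideanSpace ℝ (Fin n),
      (∀ t : ℝ, 0 ≤ t → HasDerivAt x (F (x t)) t) →
      0 ≤ rthMax r (fun j => h j (x 0)) →
      ∀ t : ℝ, 0 ≤ t →
        0 ≤ rthMax r (fun j => h j (x t)) ∧
        r ≤ (Finset.univ.filter (fun j : Fin p => 0 ≤ h j (x t))).card := by
  intro x hx hx0
  set g : ℝ → ℝ := fun t => rthMax r fun j => h j (x t)
  have hhx : ∀ t ≥ 0, ∀ j, ContinuousAt (fun t => h j (x t)) t := fun t ht j =>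
    (hh j).continuous.continuousAt.comp (hx t ht).continuousAt
  have hgc : ContinuousOn g (Ici 0) := fun t ht =>
    ((lipschitzWith_rthMax hr1 hrp).continuous.continuousAt.comp
      (continuousAt_pi.2 (hhx t ht))).continuousWithinAt
  have hdini : ∀ s ≥ 0, x s ∈ D → ∀ c < -α (g s), ∀ᶠ z in 𝓝[>] s, c < slope g s z := by
    intro s hs hxs c hc
    refine eventually_lt_slope_rthMax hr1 hrp (hhx s hs) (fun j hj => ⟨_, ?_,
      ((hh j).differentiable one_ne_zero (x s)).hasFDerivAt.comp_hasDerivAt s (hx s hs)⟩) hc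
    have hj' := hbarrier j (x s) hxs
    rwa [hj, sub_self, hρ.2.1, mul_zero, sub_zero, inner_gradient_left] at hj'
  have hnonneg : ∀ t ≥ 0, 0 ≤ g t := by
    refine nonneg_of_liminf_slope_right_nonneg_Ici hgc hx0 fun t ht hgt => ?_
    have hnear : ∀ᶠ s in 𝓝[≥] t, x s ∈ D ∧ 0 ≤ s :=
      (((hx t ht).continuousAt.eventually (hD.mem_nhds (hCD hgt))).filter_mono
        nhdsWithin_le_nhds).and (eventually_mem_nhdsWithin.mono fun _ hs => ht.trans hs)
    filter_upwards [hnear] with s ⟨hxs, hs⟩ hgs c hc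
    have hα_nonpos : α (g s) ≤ 0 := hα.2.2 ▸ hα.2.1.monotone hgs
    exact (hdini s hs hxs c (by linarith)).frequently
  exact fun t ht => ⟨hnonneg t ht, (le_rthMax_iff hr1 hrp _ 0).1 (hnonneg t ht)⟩

/-- Lemma 4 (combinatorial CBF forward invariance, closed-loop form): the combinatorial
set `C̃ = {x | max^{(r)}_j h_j(x) ≥ 0}` is forward invariant, i.e. at least `r` of the
`p` barrier functions stay nonnegative along closed-loop trajectories. -/
theorem combinatorial_cbf_forward_invariance {n p : ℕ}
    (F : EuclideanSpace ℝ (Fin n) → EuclideanSpace ℝ (Fin n))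
    (hF : Continuous F)
    (h : Fin p → EuclideanSpace ℝ (Fin n) → ℝ) (hh : ∀ j, ContDiff ℝ 1 (h j))
    (r : ℕ) (hr1 : 1 ≤ r) (hrp : r ≤ p)
    (θ : EuclideanSpace ℝ (Fin n) → ℝ) (hθ : Continuous θ) (hθ0 : ∀ x, 0 ≤ θ x)
    (ρ : ℝ → ℝ) (hρc : Continuous ρ) (hρ : IsPosDef ρ)
    (α : ℝ → ℝ) (hα : IsClassKe α) (hαlip : LocallyLipschitz α)
    (D : Set (EuclideanSpace ℝ (Fin n))) (hD : IsOpen D)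
    (hCD : {x : EuclideanSpace ℝ (Fin n) | 0 ≤ rthMax r (fun j => h j x)} ⊆ D)
    (hbarrier : ∀ j : Fin p, ∀ x ∈ D,
      ⟪gradient (h j) x, F x⟫ ≥
        -α (h j x) - θ x * ρ (h j x - rthMax r (fun i => h i x))) :
    ∀ x : ℝ → EuclideanSpace ℝ (Fin n),
      (∀ t : ℝ, 0 ≤ t → HasDerivAt x (F (x t)) t) →
      0 ≤ rthMax r (fun j => h j (x 0)) →
      ∀ t : ℝ, 0 ≤ t →
        0 ≤ rthMax r (fun j => h j (x t)) ∧
        r ≤ (Finset.univ.filter (fun j : Fin p => 0 ≤ h j (x t))).card :=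
  combinatorial_cbf_forward_invariance_general F h hh r hr1 hrp θ ρ hρ α hα D hD hCD hbarrier
end

section
/- Let f : ℝⁿ → ℝⁿ and g : ℝⁿ → ℝ^{n×m}, let V₁,…,V_p : ℝⁿ → ℝ be continuously differentiable, fix c_j > 0, set h_j(x) := c_j − V_j(x), let r ∈ {1,…,p}, h̃(x) := max^{(r)}(h₁(x),…,h_p(x)), and fix j† ∈ {1,…,p}. Let α_{j†} be class-K, α_{h̃} extended class-K, and ρ : ℝ → ℝ positive definite. Fix a point x with h̃(x) ≥ 0 and define the critical index set J(x) := {j : h_j(x) = h̃(x)}. Assume: if h_{j†}(x) ≥ 0, there exists u ∈ ℝᵐ with ⟨∇V_{j†}(x), f(x) + g(x)u⟩ < −α_{j†}(V_{j†}(x)) and ⟨∇h_j(x), f(x) + g(x)u⟩ > −α_{h̃}(h_j(x)) for all j ∈ J(x); and if h_{j†}(x) < 0, there exists u ∈ ℝᵐ with ⟨∇h_j(x), f(x) + g(x)u⟩ > −α_{h̃}(h_j(x)) for all j ∈ J(x). Then there exist u ∈ ℝᵐ and ω ≥ 0 such that ⟨∇V_{j†}(x), f(x) + g(x)u⟩ <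 −α_{j†}(V_{j†}(x)) + ω·max(0, −h_{j†}(x)) and, for every j ∈ {1,…,p}, ⟨∇h_j(x), f(x) + g(x)u⟩ > −α_{h̃}(h_j(x)) − ω·ρ(h_j(x) − h̃(x)); that is, the combinatorial stabilization quadratic program is strictly feasible (pointwise Slater condition) at x. -/
open scoped RealInnerProductSpace

/-- Key claim in the proof of Proposition 1 (pointwise Slater condition): strict
feasibility of the critical constraints (indexed by `J(x) = {j : h_j(x) = h̃(x)}`)
implies strict feasibility of all `p + 1` constraints of the combinatorial
stabilization filter, for a sufficiently large auxiliary variable `ω ≥ 0`.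
Here `h_j = c_j - V_j` and `h̃ = max^{(r)} h_j`. -/
theorem combinatorial_qp_slater {n m p : ℕ}
    (r : ℕ) (hr1 : 1 ≤ r) (hrp : r ≤ p) (jd : Fin p)
    (f : EuclideanSpace ℝ (Fin n) → EuclideanSpace ℝ (Fin n))
    (g : EuclideanSpace ℝ (Fin n) → EuclideanSpace ℝ (Fin m) →L[ℝ] EuclideanSpace ℝ (Fin n))
    (V : Fin p → EuclideanSpace ℝ (Fin n) → ℝ) (hV : ∀ j, ContDiff ℝ 1 (V j))
    (c : Fin p → ℝ) (hc : ∀ j, 0 < c j)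
    (αj : ℝ → ℝ) (hαj : IsClassK αj)
    (αh : ℝ → ℝ) (hαh : IsClassKe αh)
    (ρ : ℝ → ℝ) (hρ : IsPosDef ρ)
    (x : EuclideanSpace ℝ (Fin n))
    (hx : 0 ≤ rthMax r (fun j => c j - V j x))
    -- case h_{j†}(x) ≥ 0: strict feasibility of the CLF constraint and the critical CBFs
    (hcase1 : 0 ≤ c jd - V jd x → ∃ u : EuclideanSpace ℝ (Fin m),
      ⟪gradient (V jd) x, f x + g x u⟫ < -αj (V jd x) ∧
      ∀ j : Fin p, c j - V j x = rthMax r (fun i => c i - V i x) →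
        ⟪gradient (fun z => c j - V j z) x, f x + g x u⟫ > -αh (c j - V j x))
    -- case h_{j†}(x) < 0: strict feasibility of the critical CBFs
    (hcase2 : c jd - V jd x < 0 → ∃ u : EuclideanSpace ℝ (Fin m),
      ∀ j : Fin p, c j - V j x = rthMax r (fun i => c i - V i x) →
        ⟪gradient (fun z => c j - V j z) x, f x + g x u⟫ > -αh (c j - V j x)) :
    ∃ (u : EuclideanSpace ℝ (Fin m)) (ω : ℝ), 0 ≤ ω ∧
      ⟪gradient (V jd) x, f x + g x u⟫ <
        -αj (V jd x) + ω * max 0 (-(c jd - V jd x)) ∧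
      ∀ j : Fin p,
        ⟪gradient (fun z => c j - V j z) x, f x + g x u⟫ >
          -αh (c j - V j x) - ω * ρ ((c j - V j x) - rthMax r (fun i => c i - V i x)) := by

  classical
  haveI : Nonempty (Fin p) := ⟨jd⟩
  -- obtain a common control u
  obtain ⟨u, hu1, hu2⟩ : ∃ u : EuclideanSpace ℝ (Fin m),
      (0 ≤ c jd - V jd x → ⟪gradient (V jd) x, f x + g x u⟫ < -αj (V jd x)) ∧
      ∀ j : Fin p, c j - V j x = rthMax r (fun i => c i - V i x) →
        ⟪gradient (fun z => c j - V j z) x, f x + g x u⟫ > -αh (c j - V j x) := by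
    by_cases hjd : 0 ≤ c jd - V jd x
    · obtain ⟨u, h1, h2⟩ := hcase1 hjd
      exact ⟨u, fun _ => h1, h2⟩
    · obtain ⟨u, h2⟩ := hcase2 (lt_of_not_ge hjd)
      exact ⟨u, fun h => absurd h hjd, h2⟩
  set M : ℝ := rthMax r (fun i => c i - V i x) with hM
  set ωj : Fin p → ℝ := fun j =>
    if c j - V j x - M = 0 then 0
    else (-αh (c j - V j x) - ⟪gradient (fun z => c j - V j z) x, f x + g x u⟫)
            / ρ (c j - V j x - M) + 1 with hωj
  set ωc : ℝ :=
    if 0 ≤ c jd - V jd x then 0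
    else (⟪gradient (V jd) x, f x + g x u⟫ + αj (V jd x)) / (-(c jd - V jd x)) + 1 with hωc
  set ω : ℝ := max 0 (max ωc (Finset.univ.sup' Finset.univ_nonempty ωj)) with hω
  have hω0 : 0 ≤ ω := le_max_left _ _
  refine ⟨u, ω, hω0, ?_, ?_⟩
  · by_cases hjd : 0 ≤ c jd - V jd x
    · have h1 := hu1 hjd
      have h2 : 0 ≤ ω * max 0 (-(c jd - V jd x)) := mul_nonneg hω0 (le_max_left _ _)
      linarith
    · push_neg at hjd
      have hpos : 0 < -(c jd - V jd x) := by linarith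
      have hmax : max 0 (-(c jd - V jd x)) = -(c jd - V jd x) := max_eq_right hpos.le
      have hωcv : ωc = (⟪gradient (V jd) x, f x + g x u⟫ + αj (V jd x)) / (-(c jd - V jd x)) + 1 := by
        rw [hωc, if_neg (not_le.mpr hjd)]
      have hge : ωc ≤ ω := le_trans (le_max_left _ _) (le_max_right _ _)
      have hq : (⟪gradient (V jd) x, f x + g x u⟫ + αj (V jd x)) / (-(c jd - V jd x)) < ω := by
        rw [hωcv] at hge; linarith
      have := (div_lt_iff₀ hpos).mp hq
      rw [hmax]; linarith
  · intro j
    by_cases hd : c j - V j x - M = 0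
    · have hcrit := hu2 j (by linarith)
      have hz : ρ (c j - V j x - M) = 0 := by rw [hd, hρ.2.1]
      rw [hz, mul_zero, sub_zero]
      exact hcrit
    · have hρd : 0 < ρ (c j - V j x - M) := hρ.2.2 _ hd
      have hωjv : ωj j = (-αh (c j - V j x) - ⟪gradient (fun z => c j - V j z) x, f x + g x u⟫)
            / ρ (c j - V j x - M) + 1 := by
        rw [hωj]; simp only [if_neg hd]
      have hle : ωj j ≤ ω :=
        le_trans (Finset.le_sup' ωj (Finset.mem_univ j))
          (le_trans (le_max_right _ _) (le_max_right _ _))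
      have hq : (-αh (c j - V j x) - ⟪gradient (fun z => c j - V j z) x, f x + g x u⟫)
            / ρ (c j - V j x - M) < ω := by
        rw [hωjv] at hle; linarith
      have := (div_lt_iff₀ hρd).mp hq
      linarith
end

section
/- Let T > 0, let V : ℝⁿ × ℝ → ℝ be continuously differentiable, let ℓ, s : ℝⁿ → ℝ, and let α : ℝ → ℝ be extended class-K and locally Lipschitz. Assume the terminal condition V(y, 0) = min(ℓ(y), s(y)) for all y ∈ ℝⁿ, and the obstacle bound V(y, τ) ≤ s(y) for all y ∈ ℝⁿ and all τ ∈ [−T, 0]. Let x : [0, T] → ℝⁿ be a differentiable curve such that V(x(0), −T) ≥ 0 and, for all t ∈ [0, T], (d/dt)[V(x(t), t − T)] ≥ −α(V(x(t), t − T)). Then V(x(t), t − T) ≥ 0 for all t ∈ [0, T]; consequently s(x(t)) ≥ 0 for all t ∈ [0, T] (the trajectory never enters the obstacle set O = {y : s(y) < 0}), and ℓ(x(T)) ≥ 0 (the trajectory is in the target set {y : ℓ(y) ≥ 0} at time T). -/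
open Set

lemma IsClassKe.neg_of_neg {α : ℝ → ℝ} (hα : IsClassKe α) {v : ℝ} (hv : v < 0) : α v < 0 :=
  hα.2.2 ▸ hα.2.1 hv

lemma exists_last_nonneg_of_neg {W : ℝ → ℝ} {a t₁ : ℝ} (hat₁ : a ≤ t₁)
    (hW : ContinuousOn W (Icc a t₁)) (ha : 0 ≤ W a) (ht₁ : W t₁ < 0) :
    ∃ t₀ ∈ Ico a t₁, 0 ≤ W t₀ ∧ ∀ t ∈ Ioc t₀ t₁, W t < 0 := by
  have hS : IsCompact (Icc a t₁ ∩ W ⁻¹' Ici 0) := isCompact_Icc.of_isClosed_subset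
    (hW.preimage_isClosed_of_isClosed isClosed_Icc isClosed_Ici) inter_subset_left
  obtain ⟨t₀, ⟨⟨hat₀, ht₀t₁⟩, ht₀⟩, hmax⟩ := hS.exists_isGreatest ⟨a, ⟨le_rfl, hat₁⟩, ha⟩
  refine ⟨t₀, ⟨hat₀, ht₀t₁.lt_of_ne ?_⟩, ht₀, fun t ht => ?_⟩
  · rintro rfl
    exact (not_le.mpr ht₁) ht₀
  · by_contra! h
    exact (not_le.mpr ht.1) (hmax ⟨⟨hat₀.trans ht.1.le, ht.2⟩, h⟩)

lemma nonneg_of_deriv_pos_of_neg {W : ℝ → ℝ} {a b : ℝ} (hW : ContinuousOn W (Icc a b))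
    (ha : 0 ≤ W a) (hderiv : ∀ t ∈ Ioo a b, W t < 0 → 0 < deriv W t) :
    ∀ t ∈ Icc a b, 0 ≤ W t := by
  intro t₁ ht₁
  by_contra! hneg
  obtain ⟨t₀, ⟨hat₀, ht₀t₁⟩, ht₀, hafter⟩ :=
    exists_last_nonneg_of_neg ht₁.1 (hW.mono (Icc_subset_Icc_right ht₁.2)) ha hneg
  have hsub : Icc t₀ t₁ ⊆ Icc a b := Icc_subset_Icc hat₀ ht₁.2
  have hmono : StrictMonoOn W (Icc t₀ t₁) := by
    refine strictMonoOn_of_deriv_pos (convex_Icc _ _) (hW.mono hsub) fun t ht => ?_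
    rw [interior_Icc] at ht
    exact hderiv t ⟨hat₀.trans_lt ht.1, ht.2.trans_le ht₁.2⟩ (hafter t ⟨ht.1, ht.2.le⟩)
  have := hmono (left_mem_Icc.mpr ht₀t₁.le) (right_mem_Icc.mpr ht₀t₁.le) ht₀t₁
  linarith

theorem reach_avoid_core_general {n : ℕ}
    (T : ℝ) (hT : 0 < T)
    (V : EuclideanSpace ℝ (Fin n) × ℝ → ℝ) (hV : ContDiff ℝ 1 V)
    (ℓ s : EuclideanSpace ℝ (Fin n) → ℝ)
    (α : ℝ → ℝ) (hα : IsClassKe α)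
    (hterm : ∀ y : EuclideanSpace ℝ (Fin n), V (y, 0) = min (ℓ y) (s y))
    (hobs : ∀ y : EuclideanSpace ℝ (Fin n), ∀ τ ∈ Set.Icc (-T) 0, V (y, τ) ≤ s y)
    (x : ℝ → EuclideanSpace ℝ (Fin n))
    (hx : ∀ t ∈ Set.Icc 0 T, DifferentiableAt ℝ x t)
    (h0 : 0 ≤ V (x 0, -T))
    (hineq : ∀ t ∈ Set.Icc 0 T,
      deriv (fun u => V (x u, u - T)) t ≥ -α (V (x t, t - T))) :
    (∀ t ∈ Set.Icc 0 T, 0 ≤ V (x t, t - T)) ∧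
    (∀ t ∈ Set.Icc 0 T, 0 ≤ s (x t)) ∧
    0 ≤ ℓ (x T) := by
  set W : ℝ → ℝ := fun u => V (x u, u - T)
  have hWcont : ContinuousOn W (Icc 0 T) := fun t ht =>
    (hV.continuous.continuousAt.comp
      ((hx t ht).continuousAt.prodMk (continuousAt_id.sub continuousAt_const))).continuousWithinAt
  have hWnonneg : ∀ t ∈ Icc 0 T, 0 ≤ W t := by
    refine nonneg_of_deriv_pos_of_neg hWcont (by simpa [W] using h0) fun t ht hWt => ?_
    linarith [hineq t (Ioo_subset_Icc_self ht), hα.neg_of_neg hWt]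
  refine ⟨hWnonneg, fun t ht => (hWnonneg t ht).trans (hobs _ _ ⟨?_, ?_⟩), ?_⟩
  · linarith [ht.1]
  · linarith [ht.2]
  · have hT' := hWnonneg T (right_mem_Icc.mpr hT.le)
    simp only [W, sub_self, hterm] at hT'
    exact hT'.trans (min_le_left _ _)

/-- Reach-avoid core of the proof of Proposition 2: if the Hamilton–Jacobi reach-avoid
value function `V` satisfies the terminal condition `V(y,0) = min(ℓ(y), s(y))` and the
obstacle bound `V(y,τ) ≤ s(y)`, then a barrier-type decrease condition on
`t ↦ V(x(t), t − T)` with nonnegative initial value forces the value to stay nonnegative,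
hence the trajectory avoids the obstacle `{s < 0}` and is in the target `{ℓ ≥ 0}` at
time `T`. -/
theorem reach_avoid_core {n : ℕ}
    (T : ℝ) (hT : 0 < T)
    (V : EuclideanSpace ℝ (Fin n) × ℝ → ℝ) (hV : ContDiff ℝ 1 V)
    (ℓ s : EuclideanSpace ℝ (Fin n) → ℝ)
    (α : ℝ → ℝ) (hα : IsClassKe α) (hαlip : LocallyLipschitz α)
    (hterm : ∀ y : EuclideanSpace ℝ (Fin n), V (y, 0) = min (ℓ y) (s y))
    (hobs : ∀ y : EuclideanSpace ℝ (Fin n), ∀ τ ∈ Set.Icc (-T) 0, V (y, τ) ≤ s y)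
    (x : ℝ → EuclideanSpace ℝ (Fin n))
    (hx : ∀ t ∈ Set.Icc 0 T, DifferentiableAt ℝ x t)
    (h0 : 0 ≤ V (x 0, -T))
    (hineq : ∀ t ∈ Set.Icc 0 T,
      deriv (fun u => V (x u, u - T)) t ≥ -α (V (x t, t - T))) :
    (∀ t ∈ Set.Icc 0 T, 0 ≤ V (x t, t - T)) ∧
    (∀ t ∈ Set.Icc 0 T, 0 ≤ s (x t)) ∧
    0 ≤ ℓ (x T) :=
  reach_avoid_core_general T hT V hV ℓ s α hα hterm hobs x hx h0 hineq
end
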